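/- Let n ≥ 1, let π ∈ S_n(132, 1̲2̲3̲) and let d be the Motzkin path Γ(π). Then coinv(π) equals the area between d and the x-axis, and des(π) equals the number of tunnels of d minus one. -/

import Mathlib

open scoped Classical

noncomputable section

/-- Steps of a Motzkin path: up, down, horizontal. -/
inductive Step : Type
  | U : Step
  | D : Step
  | H : Step
  deriving DecidableEq

/-- Steps of a bicolored Motzkin path: up, down, horizontal of color `c₁`,
horizontal of color `c₂`. -/
inductive CStep : Type
  | U : CStep
  | D : CStep
  | H : CStep
  | Ht : CStep
  deriving DecidableEq

/-- A word over `{U,D,H}` is a Motzkin word if the numbers of `U`'s and `D`'s agree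
and every prefix has at least as many `U`'s as `D`'s. -/
def IsMotzkin (w : List Step) : Prop :=
  w.count Step.U = w.count Step.D ∧
  ∀ k, (w.take k).count Step.D ≤ (w.take k).count Step.U

/-- The `y`-coordinate of the lattice point reached after the first `i` steps. -/
def levelAt (w : List Step) (i : ℕ) : ℕ :=
  (w.take i).count Step.U - (w.take i).count Step.D

/-- The height of the `i`-th step (0-indexed): the `y`-coordinate of its ending
point for a down step, of its starting point otherwise. -/
def heightAt (w : List Step) (i : ℕ) : ℕ :=
  if w.getD i Step.H = Step.D then levelAt w (i + 1) else levelAt w i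

/-- Twice the area between the path and the `x`-axis (trapezoid rule). -/
def twoArea (w : List Step) : ℕ :=
  ∑ i ∈ Finset.range w.length, (levelAt w i + levelAt w (i + 1))

/-- The number of occurrences of `p` as a factor (subword of consecutive letters) of `w`. -/
def occFactor (p w : List Step) : ℕ :=
  ((Finset.range w.length).filter fun i => p <+: w.drop i).card

/-- The `y`-coordinate reached after `i` steps, bicolored version. -/
def cLevelAt (w : List CStep) (i : ℕ) : ℕ :=
  (w.take i).count CStep.U - (w.take i).count CStep.D

/-- The height of the `i`-th step, bicolored version. -/
def cHeightAt (w : List CStep) (i : ℕ) : ℕ :=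
  if w.getD i CStep.H = CStep.D then cLevelAt w (i + 1) else cLevelAt w i

/-- A bicolored Motzkin word: a Motzkin word whose horizontal steps have two possible
colors (`H` and `Ht`), horizontal steps at height `0` not being allowed to have the
second color. -/
def IsBicoloredMotzkin (w : List CStep) : Prop :=
  w.count CStep.U = w.count CStep.D ∧
  (∀ k, (w.take k).count CStep.D ≤ (w.take k).count CStep.U) ∧
  (∀ i < w.length, w.getD i CStep.H = CStep.Ht → cHeightAt w i ≠ 0)

/-- A histoire de Laguerre of length `n`: a bicolored Motzkin path of length `n`
together with a sequence `l` of nonnegative integers such that `l i ≤ h i` for each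
step, the inequality being strict for the horizontal steps of the second color
(the "suitable constraints" of De Medicis and Viennot). -/
def IsLaguerre (n : ℕ) (dl : List CStep × List ℕ) : Prop :=
  dl.1.length = n ∧ dl.2.length = n ∧ IsBicoloredMotzkin dl.1 ∧
  ∀ i < n, dl.2.getD i 0 ≤ cHeightAt dl.1 i ∧
    (dl.1.getD i CStep.H = CStep.Ht → dl.2.getD i 0 < cHeightAt dl.1 i)

/-- A labelled Motzkin path of length `n`: a Motzkin path whose down steps carry a
label not exceeding their height, all other steps carrying the label `0` (unlabelled). -/
def IsLabelledMotzkin (n : ℕ) (dl : List Step × List ℕ) : Prop :=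
  dl.1.length = n ∧ dl.2.length = n ∧ IsMotzkin dl.1 ∧
  ∀ i < n, (dl.1.getD i Step.H = Step.D → dl.2.getD i 0 ≤ heightAt dl.1 i) ∧
    (dl.1.getD i Step.H ≠ Step.D → dl.2.getD i 0 = 0)

/-- The embedding of plain Motzkin steps into bicolored steps. -/
def Step.toC : Step → CStep
  | Step.U => CStep.U
  | Step.D => CStep.D
  | Step.H => CStep.H

/-- The value (as a natural number, 0-indexed) of the permutation `π` at the
(0-indexed) position `i`; junk value `0` out of range. -/
def pv {n : ℕ} (π : Equiv.Perm (Fin n)) (i : ℕ) : ℕ :=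
  if h : i < n then (π ⟨i, h⟩ : Fin n).val else 0

/-- Position `p` starts an ascending run of `π` (in one-line notation):
either `p = 0` or there is a descent just before `p`. -/
def RunStartAt {n : ℕ} (π : Equiv.Perm (Fin n)) (p : Fin n) : Prop :=
  ∀ q : Fin n, (q : ℕ) + 1 = (p : ℕ) → π p < π q

/-- Position `p` ends an ascending run of `π`. -/
def RunEndAt {n : ℕ} (π : Equiv.Perm (Fin n)) (p : Fin n) : Prop :=
  ∀ q : Fin n, (p : ℕ) + 1 = (q : ℕ) → π q < π p

/-- The step of the bicolored Motzkin path `Γ(π)` associated with the value `v`: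
`U` if `v` is a head, `D` if it is a tail, `H` if it is a head-tail, `Ht` if it
is a boarder. -/
def gammaStep {n : ℕ} (π : Equiv.Perm (Fin n)) (v : Fin n) : CStep :=
  if RunStartAt π (π.symm v) then
    if RunEndAt π (π.symm v) then CStep.H else CStep.U
  else
    if RunEndAt π (π.symm v) then CStep.D else CStep.Ht

/-- The label of `Γ(π)` at the value `v`: the number of ascending runs of `π`
(determined by the position `pq.1` of their first element and the position `pq.2`
of their last element) whose first value is `< v`, whose last value is `> v`, and
whose last element precedes `v` in `π`. -/
def gammaLabel {n : ℕ} (π : Equiv.Perm (Fin n)) (v : Fin n) : ℕ :=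
  (Finset.univ.filter fun pq : Fin n × Fin n =>
    RunStartAt π pq.1 ∧ RunEndAt π pq.2 ∧ pq.1 ≤ pq.2 ∧
    (∀ r : Fin n, pq.1 ≤ r → r < pq.2 → ¬ RunEndAt π r) ∧
    π pq.1 < v ∧ v < π pq.2 ∧ pq.2 < π.symm v).card

/-- The map `Γ` from permutations to pairs (bicolored Motzkin path, label sequence). -/
def Gamma {n : ℕ} (π : Equiv.Perm (Fin n)) : List CStep × List ℕ :=
  (List.ofFn fun v => gammaStep π v, List.ofFn fun v => gammaLabel π v)

/-- The (uncolored) Motzkin path `Γ(π)` for permutations with no boarders: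
`U` for heads, `D` for tails, `H` for head-tails. -/
def gammaPath {n : ℕ} (π : Equiv.Perm (Fin n)) : List Step :=
  List.ofFn fun v : Fin n =>
    if RunStartAt π (π.symm v) then
      if RunEndAt π (π.symm v) then Step.H else Step.U
    else
      if RunEndAt π (π.symm v) then Step.D else Step.H

/-- `π` is an involution. -/
def IsInvolution {n : ℕ} (π : Equiv.Perm (Fin n)) : Prop :=
  ∀ x, π (π x) = x

/-- The Motzkin path `Ψ(π)` of an involution `π`: `H` at fixed points, `U` at the
smaller element of a 2-cycle, `D` at the larger element of a 2-cycle. -/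
def psiWord {n : ℕ} (π : Equiv.Perm (Fin n)) : List Step :=
  List.ofFn fun v : Fin n =>
    if π v = v then Step.H else if v < π v then Step.U else Step.D

/-- The label of `Ψ(π)` at `v`: if `v` is the larger element of a 2-cycle
`(π v, v)`, the number of 2-cycles `(x, π x)` with `π v < x < v < π x`; `0` otherwise. -/
def psiLabel {n : ℕ} (π : Equiv.Perm (Fin n)) (v : Fin n) : ℕ :=
  if π v < v then
    (Finset.univ.filter fun x : Fin n => π v < x ∧ x < v ∧ v < π x).card
  else 0

/-- The map `Ψ` from involutions to labelled Motzkin paths. -/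
def Psi {n : ℕ} (π : Equiv.Perm (Fin n)) : List Step × List ℕ :=
  (psiWord π, List.ofFn fun v => psiLabel π v)

/-- Number of inversions of `π`. -/
def invCount {n : ℕ} (π : Equiv.Perm (Fin n)) : ℕ :=
  (Finset.univ.filter fun p : Fin n × Fin n => p.1 < p.2 ∧ π p.2 < π p.1).card

/-- Number of coinversions of `π`. -/
def coinvCount {n : ℕ} (π : Equiv.Perm (Fin n)) : ℕ :=
  (Finset.univ.filter fun p : Fin n × Fin n => p.1 < p.2 ∧ π p.1 < π p.2).card

/-- Number of descents of `π`. -/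
def desCount {n : ℕ} (π : Equiv.Perm (Fin n)) : ℕ :=
  ((Finset.range (n - 1)).filter fun i => pv π (i + 1) < pv π i).card

/-- Number of ascents of `π`. -/
def ascCount {n : ℕ} (π : Equiv.Perm (Fin n)) : ℕ :=
  ((Finset.range (n - 1)).filter fun i => pv π i < pv π (i + 1)).card

/-- Number of fixed points of `π`. -/
def fixCount {n : ℕ} (π : Equiv.Perm (Fin n)) : ℕ :=
  (Finset.univ.filter fun i : Fin n => π i = i).card

/-- Number of occurrences of the consecutive pattern 123 in `π`. -/
def occC123 {n : ℕ} (π : Equiv.Perm (Fin n)) : ℕ :=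
  ((Finset.range (n - 2)).filter fun i =>
    pv π i < pv π (i + 1) ∧ pv π (i + 1) < pv π (i + 2)).card

/-- Number of occurrences of the consecutive pattern 132 in `π`. -/
def occC132 {n : ℕ} (π : Equiv.Perm (Fin n)) : ℕ :=
  ((Finset.range (n - 2)).filter fun i =>
    pv π i < pv π (i + 2) ∧ pv π (i + 2) < pv π (i + 1)).card

/-- Number of occurrences of the consecutive pattern 213 in `π`. -/
def occC213 {n : ℕ} (π : Equiv.Perm (Fin n)) : ℕ :=
  ((Finset.range (n - 2)).filter fun i =>
    pv π (i + 1) < pv π i ∧ pv π i < pv π (i + 2)).card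

/-- Number of occurrences of the consecutive pattern 231 in `π`. -/
def occC231 {n : ℕ} (π : Equiv.Perm (Fin n)) : ℕ :=
  ((Finset.range (n - 2)).filter fun i =>
    pv π (i + 2) < pv π i ∧ pv π i < pv π (i + 1)).card

/-- Number of occurrences of the consecutive pattern 312 in `π`. -/
def occC312 {n : ℕ} (π : Equiv.Perm (Fin n)) : ℕ :=
  ((Finset.range (n - 2)).filter fun i =>
    pv π (i + 1) < pv π (i + 2) ∧ pv π (i + 2) < pv π i).card

/-- Number of occurrences of the consecutive pattern 321 in `π`. -/
def occC321 {n : ℕ} (π : Equiv.Perm (Fin n)) : ℕ :=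
  ((Finset.range (n - 2)).filter fun i =>
    pv π (i + 2) < pv π (i + 1) ∧ pv π (i + 1) < pv π i).card

/-- `π` contains the classical pattern 132. -/
def Contains132 {n : ℕ} (π : Equiv.Perm (Fin n)) : Prop :=
  ∃ i j k : Fin n, i < j ∧ j < k ∧ π i < π k ∧ π k < π j

/-- `π` contains the consecutive pattern 123. -/
def ContainsC123 {n : ℕ} (π : Equiv.Perm (Fin n)) : Prop :=
  ∃ i j k : Fin n, (i : ℕ) + 1 = (j : ℕ) ∧ (j : ℕ) + 1 = (k : ℕ) ∧ π i < π j ∧ π j < π k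

/-- `π` contains the classical pattern 3412. -/
def Contains3412 {n : ℕ} (π : Equiv.Perm (Fin n)) : Prop :=
  ∃ i₁ i₂ i₃ i₄ : Fin n, i₁ < i₂ ∧ i₂ < i₃ ∧ i₃ < i₄ ∧
    π i₃ < π i₄ ∧ π i₄ < π i₁ ∧ π i₁ < π i₂

/-- `π` contains the vincular pattern 1-2̲3̲. -/
def Contains1_23 {n : ℕ} (π : Equiv.Perm (Fin n)) : Prop :=
  ∃ i j k : Fin n, i < j ∧ (j : ℕ) + 1 = (k : ℕ) ∧ π i < π j ∧ π j < π k

/-- `π` contains the vincular pattern 1-3̲2̲. -/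
def Contains1_32 {n : ℕ} (π : Equiv.Perm (Fin n)) : Prop :=
  ∃ i j k : Fin n, i < j ∧ (j : ℕ) + 1 = (k : ℕ) ∧ π i < π k ∧ π k < π j

/-- `w` is the one-line notation of a permutation of `{0, …, n-1}`. -/
def IsPermWord (n : ℕ) (w : List ℕ) : Prop :=
  List.Perm w (List.range n)

/-- Position `p` starts an ascending run of the word `w`. -/
def wRunStart (w : List ℕ) (p : ℕ) : Prop :=
  p = 0 ∨ w.getD p 0 < w.getD (p - 1) 0

/-- Position `p` ends an ascending run of the word `w`. -/
def wRunEnd (w : List ℕ) (p : ℕ) : Prop :=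
  p + 1 = w.length ∨ w.getD (p + 1) 0 < w.getD p 0

/-- The step of `Γ(w)` associated with the value `v`. -/
def wGammaStep (w : List ℕ) (v : ℕ) : CStep :=
  if wRunStart w (w.idxOf v) then
    if wRunEnd w (w.idxOf v) then CStep.H else CStep.U
  else
    if wRunEnd w (w.idxOf v) then CStep.D else CStep.Ht

/-- The label of `Γ(w)` at the value `v`. -/
def wGammaLabel (w : List ℕ) (v : ℕ) : ℕ :=
  ((Finset.range w.length ×ˢ Finset.range w.length).filter fun pq =>
    wRunStart w pq.1 ∧ wRunEnd w pq.2 ∧ pq.1 ≤ pq.2 ∧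
    (∀ r, pq.1 ≤ r → r < pq.2 → ¬ wRunEnd w r) ∧
    w.getD pq.1 0 < v ∧ v < w.getD pq.2 0 ∧ pq.2 < w.idxOf v).card

/-- The map `Γ` on one-line words. -/
def wGamma (w : List ℕ) : List CStep × List ℕ :=
  ((List.range w.length).map (wGammaStep w), (List.range w.length).map (wGammaLabel w))

/-- The word `w` contains the vincular pattern 1-2̲3̲. -/
def wContains1_23 (w : List ℕ) : Prop :=
  ∃ i j, i < j ∧ j + 1 < w.length ∧
    w.getD i 0 < w.getD j 0 ∧ w.getD j 0 < w.getD (j + 1) 0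

/-- The word `w` contains the vincular pattern 1-3̲2̲. -/
def wContains1_32 (w : List ℕ) : Prop :=
  ∃ i j, i < j ∧ j + 1 < w.length ∧
    w.getD i 0 < w.getD (j + 1) 0 ∧ w.getD (j + 1) 0 < w.getD j 0

/-- The word `w` contains the classical pattern 132. -/
def wContains132 (w : List ℕ) : Prop :=
  ∃ i j k, i < j ∧ j < k ∧ k < w.length ∧
    w.getD i 0 < w.getD k 0 ∧ w.getD k 0 < w.getD j 0

/-- The word `w` contains the consecutive pattern 123. -/
def wContainsC123 (w : List ℕ) : Prop :=
  ∃ i, i + 2 < w.length ∧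
    w.getD i 0 < w.getD (i + 1) 0 ∧ w.getD (i + 1) 0 < w.getD (i + 2) 0

/-- The one-line word of the Foata image `F(π)` of an involution `π`: write `π` in
standard cycle notation (each cycle with its least element first, cycles in
decreasing order of their least elements) and erase the parentheses. -/
def foataWord {n : ℕ} (π : Equiv.Perm (Fin n)) : List ℕ :=
  (((List.range n).reverse).map fun m =>
    if pv π m = m then [m]
    else if m < pv π m then [m, pv π m]
    else ([] : List ℕ)).flatten

/-- The number of long tunnels of `d`: occurrences of factors `U α D` with `α` a
nonempty Motzkin word. -/
def longTunnelCount (d : List Step) : ℕ :=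
  ((Finset.range d.length ×ˢ Finset.range d.length).filter fun ij =>
    ij.1 + 1 < ij.2 ∧ d.getD ij.1 Step.H = Step.U ∧ d.getD ij.2 Step.H = Step.D ∧
    IsMotzkin ((d.drop (ij.1 + 1)).take (ij.2 - ij.1 - 1))).card

/-- The number of weak valleys of `d`: occurrences of the factors `HH, HU, DH, DU`. -/
def weakValleyCount (d : List Step) : ℕ :=
  occFactor [Step.H, Step.H] d + occFactor [Step.H, Step.U] d +
  occFactor [Step.D, Step.H] d + occFactor [Step.D, Step.U] d

end

/-!
Avoiding the consecutive pattern 123 leaves no element in the middle of an ascending run, so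
the runs of length two are exactly the ascents `π q < π (q + 1)`, and `Γ(π)` has an up step at
the value `π q` and a down step at `π (q + 1)` for each of them. After `i` steps the path is
therefore at the height `#{q ascent | π q < i ≤ π (q + 1)}`, and its area is
`∑ (π (q + 1) - π q)` over the ascents. Together the two patterns also exclude the vincular
pattern 1-23; with 132 this makes the values smaller than `π (q + 1)` to its left exactly those
in `[π q, π (q + 1))`, while no smaller value precedes the first element of a run. Summing over
positions gives the same expression for `coinv π`. Finally the `H` and `U` steps sit at the
first elements of the runs, of which there are `des π + 1`.
-/

open Finset

theorem List.count_take_ofFn {α : Type*} [DecidableEq α] {m : ℕ} (f : Fin m → α) (a : α)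
    (i : ℕ) : ((List.ofFn f).take i).count a = #{v : Fin m | (v : ℕ) < i ∧ f v = a} := by
  induction m generalizing i with
  | zero => simp
  | succ m ih =>
    cases i with
    | zero => simp
    | succ i =>
      rw [List.ofFn_succ, List.take_succ_cons, List.count_cons, ih, card_filter, card_filter,
        Fin.sum_univ_succ]
      simp [add_comm]

theorem Step.count_H_add_count_U_add_count_D (w : List Step) :
    w.count .H + w.count .U + w.count .D = w.length := by
  induction w with
  | nil => rfl
  | cons s w ih => cases s <;> simp <;> omega

theorem Finset.sum_range_card_filter_lt_and_le {ι : Type*} (s : Finset ι) (l u : ι → ℕ)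
    {N : ℕ} (hu : ∀ a ∈ s, u a < N) :
    ∑ i ∈ range N, #{a ∈ s | l a < i ∧ i ≤ u a} = ∑ a ∈ s, (u a - l a) := by
  refine (sum_card_bipartiteAbove_eq_sum_card_bipartiteBelow _).symm.trans
    (sum_congr rfl fun a ha => ?_)
  rw [bipartiteAbove, ← Nat.card_Ioc]
  congr 1
  ext i
  simp only [mem_filter, mem_range, mem_Ioc]
  have := hu a ha
  omega

theorem twoArea_eq_two_mul_sum_levelAt (w : List Step) (h : levelAt w w.length = 0) :
    twoArea w = 2 * ∑ i ∈ range w.length, levelAt w i := by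
  have h0 : levelAt w 0 = 0 := by simp [levelAt]
  have hshift := sum_range_succ' (levelAt w) w.length
  rw [sum_range_succ, h, h0, add_zero, add_zero] at hshift
  rw [twoArea, sum_add_distrib, ← hshift]
  ring

theorem Fin.exists_le_and_val_add_one_eq {n : ℕ} {i j : Fin n} (h : i < j) :
    ∃ q : Fin n, i ≤ q ∧ (q : ℕ) + 1 = j :=
  ⟨⟨j - 1, by omega⟩, Fin.le_def.2 (by simp; omega), by simp; omega⟩

section RunsOfPerm

variable {n : ℕ} (π : Equiv.Perm (Fin n))

theorem pv_val (p : Fin n) : pv π p = π p := by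
  rw [pv, dif_pos p.isLt]

theorem not_runStartAt_iff (p : Fin n) :
    ¬ RunStartAt π p ↔ ∃ q : Fin n, (q : ℕ) + 1 = p ∧ π q < π p := by
  simp only [RunStartAt, not_forall, not_lt, exists_prop]
  refine exists_congr fun q => and_congr_right fun hq => ?_
  exact (π.injective.ne (Fin.ne_of_val_ne (by omega))).le_iff_lt

theorem not_runEndAt_iff (p : Fin n) :
    ¬ RunEndAt π p ↔ ∃ q : Fin n, (p : ℕ) + 1 = q ∧ π p < π q := by
  simp only [RunEndAt, not_forall, not_lt, exists_prop]
  refine exists_congr fun q => and_congr_right fun hq => ?_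
  exact (π.injective.ne (Fin.ne_of_val_ne (by omega))).le_iff_lt

theorem runStartAt_or_runEndAt (h₂ : ¬ ContainsC123 π) (p : Fin n) :
    RunStartAt π p ∨ RunEndAt π p := by
  by_contra! h
  obtain ⟨q, hq, hqp⟩ := (not_runStartAt_iff π p).1 h.1
  obtain ⟨r, hr, hpr⟩ := (not_runEndAt_iff π p).1 h.2
  exact h₂ ⟨q, p, r, hq, hr, hqp, hpr⟩

theorem not_contains1_23 (h₁ : ¬ Contains132 π) (h₂ : ¬ ContainsC123 π) :
    ¬ Contains1_23 π := by
  rintro ⟨i, j, k, hij, hjk, hij', hjk'⟩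
  obtain ⟨q, hiq, hq⟩ := Fin.exists_le_and_val_add_one_eq hij
  have hqj : π q < π j := by
    rcases eq_or_lt_of_le hiq with rfl | hiq
    · exact hij'
    · have hjq : ¬ π j < π q :=
        fun hjq => h₁ ⟨i, q, j, hiq, Fin.lt_def.2 (by omega), hij', hjq⟩
      exact lt_of_le_of_ne (not_lt.1 hjq) (π.injective.ne (Fin.ne_of_val_ne (by omega)))
  exact h₂ ⟨q, j, k, hq, hjk, hqj, hjk'⟩

def ascentPairs : Finset (Fin n × Fin n) :=
  {a | (a.1 : ℕ) + 1 = a.2 ∧ π a.1 < π a.2}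

theorem injOn_fst_ascentPairs : Set.InjOn Prod.fst (ascentPairs π : Set (Fin n × Fin n)) := by
  intro a ha b hb h
  simp only [ascentPairs, coe_filter, mem_univ, true_and, Set.mem_ofPred_eq] at ha hb
  exact Prod.ext h (Fin.ext (by rw [← ha.1, ← hb.1, h]))

theorem injOn_snd_ascentPairs : Set.InjOn Prod.snd (ascentPairs π : Set (Fin n × Fin n)) := by
  intro a ha b hb h
  simp only [ascentPairs, coe_filter, mem_univ, true_and, Set.mem_ofPred_eq] at ha hb
  exact Prod.ext (Fin.ext (by have := congrArg Fin.val h; omega)) h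

theorem image_fst_ascentPairs :
    (ascentPairs π).image Prod.fst = ({p | ¬ RunEndAt π p} : Finset (Fin n)) := by
  ext p
  simp [ascentPairs, not_runEndAt_iff]

theorem image_snd_ascentPairs :
    (ascentPairs π).image Prod.snd = ({p | ¬ RunStartAt π p} : Finset (Fin n)) := by
  ext p
  simp [ascentPairs, not_runStartAt_iff]

theorem coinvCount_eq_sum_card :
    coinvCount π = ∑ j, #{i | i < j ∧ π i < π j} := by
  simp only [coinvCount, card_filter]
  exact Fintype.sum_prod_type_right _

theorem card_coinv_eq_zero_of_runStartAt (h₁ : ¬ Contains132 π) {j : Fin n}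
    (hj : RunStartAt π j) : #{i | i < j ∧ π i < π j} = 0 := by
  rw [card_eq_zero, filter_eq_empty_iff]
  rintro i - ⟨hij, hij'⟩
  obtain ⟨q, hiq, hq⟩ := Fin.exists_le_and_val_add_one_eq hij
  rcases eq_or_lt_of_le hiq with rfl | hiq
  · exact lt_asymm hij' (hj i hq)
  · exact h₁ ⟨i, q, j, hiq, Fin.lt_def.2 (by omega), hij', hj q hq⟩

theorem card_coinv_eq_sub_of_mem_ascentPairs (h₁ : ¬ Contains132 π) (h₂ : ¬ ContainsC123 π)
    {a : Fin n × Fin n} (ha : a ∈ ascentPairs π) :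
    #{i | i < a.2 ∧ π i < π a.2} = (π a.2 : ℕ) - π a.1 := by
  simp only [ascentPairs, mem_filter, mem_univ, true_and] at ha
  obtain ⟨hsucc, hasc⟩ := ha
  rw [← Fin.card_Ico]
  refine card_equiv π fun i => ?_
  simp only [mem_filter, mem_univ, true_and, mem_Ico]
  constructor
  · rintro ⟨hi, hπi⟩
    refine ⟨not_lt.1 fun hlt => ?_, hπi⟩
    have hia : i < a.1 := Fin.lt_def.2 <| lt_of_le_of_ne (by omega)
      (Fin.val_ne_of_ne (π.injective.ne_iff.1 hlt.ne))
    exact not_contains1_23 π h₁ h₂ ⟨i, a.1, a.2, hia, hsucc, hlt, hasc⟩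
  · rintro ⟨hle, hπi⟩
    refine ⟨not_le.1 fun hai => ?_, hπi⟩
    rcases eq_or_lt_of_le hle with heq | hlt
    · have := π.injective heq
      omega
    · exact h₁ ⟨a.1, a.2, i, Fin.lt_def.2 (by omega),
        lt_of_le_of_ne hai (by rintro rfl; exact hπi.false), hlt, hπi⟩

theorem coinvCount_eq_sum_ascentPairs (h₁ : ¬ Contains132 π) (h₂ : ¬ ContainsC123 π) :
    coinvCount π = ∑ a ∈ ascentPairs π, ((π a.2 : ℕ) - π a.1) := calc
  coinvCount π = ∑ j, #{i | i < j ∧ π i < π j} := coinvCount_eq_sum_card π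
  _ = ∑ j with ¬ RunStartAt π j, #{i | i < j ∧ π i < π j} :=
    (sum_filter_of_ne (p := fun j => ¬ RunStartAt π j)
      fun _ _ h hj => h (card_coinv_eq_zero_of_runStartAt π h₁ hj)).symm
  _ = ∑ a ∈ ascentPairs π, #{i | i < a.2 ∧ π i < π a.2} := by
    rw [← image_snd_ascentPairs, sum_image (injOn_snd_ascentPairs π)]
  _ = ∑ a ∈ ascentPairs π, ((π a.2 : ℕ) - π a.1) :=
    sum_congr rfl fun _ ha => card_coinv_eq_sub_of_mem_ascentPairs π h₁ h₂ ha

-- the step of `gammaPath π` at the value `π p`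
noncomputable def runStep (p : Fin n) : Step :=
  if RunStartAt π p then if RunEndAt π p then .H else .U
  else if RunEndAt π p then .D else .H

theorem runStep_eq_U_iff (h₂ : ¬ ContainsC123 π) (p : Fin n) :
    runStep π p = .U ↔ ¬ RunEndAt π p := by
  have := runStartAt_or_runEndAt π h₂ p
  unfold runStep
  split_ifs <;> simp_all

theorem runStep_eq_D_iff (h₂ : ¬ ContainsC123 π) (p : Fin n) :
    runStep π p = .D ↔ ¬ RunStartAt π p := by
  have := runStartAt_or_runEndAt π h₂ p
  unfold runStep
  split_ifs <;> simp_all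

theorem count_take_gammaPath (s : Step) (i : ℕ) :
    ((gammaPath π).take i).count s = #{p | (π p : ℕ) < i ∧ runStep π p = s} := by
  rw [gammaPath, List.count_take_ofFn]
  refine card_equiv π.symm fun v => ?_
  simp only [mem_filter, mem_univ, true_and, Equiv.apply_symm_apply]
  rfl

theorem count_take_gammaPath_U (h₂ : ¬ ContainsC123 π) (i : ℕ) :
    ((gammaPath π).take i).count .U = #{a ∈ ascentPairs π | (π a.1 : ℕ) < i} := by
  rw [count_take_gammaPath,
    ← card_image_of_injOn ((injOn_fst_ascentPairs π).mono (filter_subset _ _)),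
    ← filter_image (p := fun p => (π p : ℕ) < i), image_fst_ascentPairs, filter_filter]
  simp only [runStep_eq_U_iff π h₂, and_comm]

theorem count_take_gammaPath_D (h₂ : ¬ ContainsC123 π) (i : ℕ) :
    ((gammaPath π).take i).count .D = #{a ∈ ascentPairs π | (π a.2 : ℕ) < i} := by
  rw [count_take_gammaPath,
    ← card_image_of_injOn ((injOn_snd_ascentPairs π).mono (filter_subset _ _)),
    ← filter_image (p := fun p => (π p : ℕ) < i), image_snd_ascentPairs, filter_filter]
  simp only [runStep_eq_D_iff π h₂, and_comm]

theorem levelAt_gammaPath (h₂ : ¬ ContainsC123 π) (i : ℕ) :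
    levelAt (gammaPath π) i = #{a ∈ ascentPairs π | (π a.1 : ℕ) < i ∧ i ≤ π a.2} := by
  have hsplit := card_filter_add_card_filter_not
    (s := {a ∈ ascentPairs π | (π a.1 : ℕ) < i}) (fun a => (π a.2 : ℕ) < i)
  have hD : {a ∈ ascentPairs π | (π a.1 : ℕ) < i ∧ (π a.2 : ℕ) < i}
      = {a ∈ ascentPairs π | (π a.2 : ℕ) < i} := by
    refine filter_congr fun a ha => ⟨And.right, fun h => ⟨lt_trans ?_ h, h⟩⟩
    exact (mem_filter.1 ha).2.2
  simp only [filter_filter, not_lt, hD] at hsplit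
  rw [levelAt, count_take_gammaPath_U π h₂, count_take_gammaPath_D π h₂]
  omega

theorem twoArea_gammaPath (h₂ : ¬ ContainsC123 π) :
    twoArea (gammaPath π) = 2 * ∑ a ∈ ascentPairs π, ((π a.2 : ℕ) - π a.1) := by
  have hlen : (gammaPath π).length = n := List.length_ofFn
  rw [twoArea_eq_two_mul_sum_levelAt, hlen]
  · simp only [levelAt_gammaPath π h₂]
    rw [sum_range_card_filter_lt_and_le _ _ _ fun a _ => (π a.2).isLt]
  · rw [hlen, levelAt_gammaPath π h₂, card_eq_zero, filter_eq_empty_iff]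
    exact fun a _ h => (π a.2).isLt.not_ge h.2

theorem count_H_add_count_U_gammaPath (h₂ : ¬ ContainsC123 π) :
    (gammaPath π).count .H + (gammaPath π).count .U = #{p | RunStartAt π p} := by
  have hlen : (gammaPath π).length = n := List.length_ofFn
  have hD : (gammaPath π).count .D = #{p | ¬ RunStartAt π p} := by
    rw [← List.take_of_length_le hlen.le, count_take_gammaPath]
    simp only [Fin.is_lt, true_and, runStep_eq_D_iff π h₂]
  have htotal := Step.count_H_add_count_U_add_count_D (gammaPath π)
  have hsplit := card_filter_add_card_filter_not (s := univ) (fun p => RunStartAt π p)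
  rw [card_univ, Fintype.card_fin] at hsplit
  omega

theorem runStartAt_succ_iff {m : ℕ} (π : Equiv.Perm (Fin (m + 1))) (k : Fin m) :
    RunStartAt π k.succ ↔ pv π (k + 1) < pv π k := by
  rw [← Fin.val_succ, ← Fin.val_castSucc k, pv_val, pv_val, ← Fin.lt_def]
  refine ⟨fun h => h _ (by simp), fun h q hq => ?_⟩
  rwa [show q = k.castSucc from Fin.ext (by simp at hq ⊢; omega)]

theorem card_runStartAt (hn : 1 ≤ n) : #{p | RunStartAt π p} = desCount π + 1 := by
  obtain ⟨m, rfl⟩ : ∃ m, n = m + 1 := ⟨n - 1, by omega⟩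
  have hzero : RunStartAt π 0 := fun q hq => absurd hq (by simp)
  rw [card_filter, Fin.sum_univ_succ, desCount, card_filter, add_tsub_cancel_right,
    ← Fin.sum_univ_eq_sum_range, add_comm, if_pos hzero]
  simp only [runStartAt_succ_iff]

end RunsOfPerm

/-- For `n ≥ 1` and `π ∈ S_n(132, 1̲2̲3̲)` with Motzkin path
`d = Γ(π)`: `coinv(π)` equals the area between `d` and the x-axis (stated as
`2·coinv(π) = twoArea d`), and `des(π)` equals the number of tunnels of `d`
(which is the number of its `H` steps plus the number of its `U` steps) minus one. -/
theorem coinv_eq_area_and_des_eq_tunnels (n : ℕ) (hn : 1 ≤ n) (π : Equiv.Perm (Fin n))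
    (h₁ : ¬ Contains132 π) (h₂ : ¬ ContainsC123 π) :
    2 * coinvCount π = twoArea (gammaPath π) ∧
    desCount π + 1 = (gammaPath π).count Step.H + (gammaPath π).count Step.U := by
  rw [coinvCount_eq_sum_ascentPairs π h₁ h₂, twoArea_gammaPath π h₂,
    count_H_add_count_U_gammaPath π h₂, card_runStartAt π hn]
  exact ⟨rfl, rfl⟩
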